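/- Let $\{m_n\}_{n\ge 0}$ be a non-decreasing sequence of positive integers and $W_n \in \mathbb{R}^{m_n \times m_{n-1}}$ satisfy $W_n = I_{m_n,m_{n-1}} + P_n$ with $\sum_{n=1}^\infty \|P_n\|_p < +\infty$. Then the sequence $I_{\infty,m_n} \prod_{k=1}^n W_k$ converges in the operator norm of bounded linear operators from $\mathbb{R}^{m_0}$ to $\ell^p$. -/

import Mathlib

/-!
Write `T_n = I_{∞,m_n} W_n ⋯ W_1`. Zero-padding is an isometry, and since `m_n ≤ m_{n+1}` it
absorbs the identity part of each layer: `I_{∞,m_{n+1}} I_{m_{n+1},m_n} = I_{∞,m_n}`. Hence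
`‖W_n‖ ≤ 1 + ‖P_n‖`, all partial products are bounded by `C = exp (∑ ‖P_k‖)`, and
`T_{n+1} - T_n = I_{∞,m_{n+1}} P_{n+1} W_n ⋯ W_1` has norm at most `C ‖P_{n+1}‖`. The increments
are summable, so `(T_n)` is Cauchy in the complete space of bounded operators into `ℓ^p`.
-/

open scoped ENNReal
open Matrix Filter

noncomputable section


/-- The `m' × m` matrix with the identity on top and zero rows below. -/
def Ipad (m' m : ℕ) : Matrix (Fin m') (Fin m) ℝ :=
  Matrix.of fun i j => if (i : ℕ) = (j : ℕ) then 1 else 0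

/-- The diagonal entries of an activation matrix are 0 or 1. -/
def ZeroOne {m : ℕ} (J : Fin m → ℝ) : Prop := ∀ i, J i = 0 ∨ J i = 1

/-- A matrix viewed as a bounded linear operator between `ℓ^p` spaces `ℝ^a → ℝ^b`. -/
def matCLM (p : ℝ≥0∞) [Fact (1 ≤ p)] {a b : ℕ} (A : Matrix (Fin b) (Fin a) ℝ) :
    PiLp p (fun _ : Fin a => ℝ) →L[ℝ] PiLp p (fun _ : Fin b => ℝ) :=
  LinearMap.toContinuousLinearMap <|
    (WithLp.linearEquiv p ℝ (Fin b → ℝ)).symm.toLinearMap ∘ₗ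
      A.mulVecLin ∘ₗ (WithLp.linearEquiv p ℝ (Fin a → ℝ)).toLinearMap

/-- Zero-padding of a finite vector into `ℓ^p`. -/
def padLp (p : ℝ≥0∞) [Fact (1 ≤ p)] {m : ℕ} (x : Fin m → ℝ) : lp (fun _ : ℕ => ℝ) p :=
  ∑ i : Fin m, lp.single p (i : ℕ) (x i)

/-- Zero-padding as a bounded linear operator `ℝ^m → ℓ^p`. -/
def padCLM (p : ℝ≥0∞) [Fact (1 ≤ p)] (m : ℕ) :
    PiLp p (fun _ : Fin m => ℝ) →L[ℝ] lp (fun _ : ℕ => ℝ) p :=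
  LinearMap.toContinuousLinearMap
    { toFun := fun x => padLp p ((WithLp.linearEquiv p ℝ (Fin m → ℝ)) x)
      map_add' := by
        intro x y
        simp only [padLp, WithLp.linearEquiv_apply]
        rw [← Finset.sum_add_distrib]
        refine Finset.sum_congr rfl fun i _ => ?_
        apply lp.ext
        funext j
        by_cases h : j = (i : ℕ)
        · subst h
          simp [lp.single_apply_self]
        · simp [lp.single_apply_ne p _ _ h]
      map_smul' := by
        intro c x
        simp only [padLp, WithLp.linearEquiv_apply, RingHom.id_apply, Finset.smul_sum]
        refine Finset.sum_congr rfl fun i _ => ?_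
        rw [show (WithLp.addEquiv p (Fin m → ℝ)).toFun (c • x) i = c • (WithLp.addEquiv p (Fin m → ℝ)).toFun x i from rfl,
          lp.single_smul] }


/-- Componentwise ReLU. -/
def relu {m : ℕ} (x : Fin m → ℝ) : Fin m → ℝ := fun i => max (x i) 0

/-- The unit cube `[0,1]^d`. -/
def cube (d : ℕ) : Set (Fin d → ℝ) := {x | ∀ i, x i ∈ Set.Icc (0:ℝ) 1}

variable {m : ℕ → ℕ}

/-- The deep ReLU network `N_n(x) = σ(W_n · + b_n) ∘ ⋯ ∘ σ(W_1 · + b_1) (x)`. -/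
def net (W : ∀ n, Matrix (Fin (m (n+1))) (Fin (m n)) ℝ) (b : ∀ n, Fin (m (n+1)) → ℝ)
    (x : Fin (m 0) → ℝ) : ∀ n, Fin (m n) → ℝ
  | 0 => x
  | n+1 => relu (W n *ᵥ net W b x n + b n)

/-- The product `J_n W_n ⋯ J_1 W_1`. -/
def prodJW (W : ∀ n, Matrix (Fin (m (n+1))) (Fin (m n)) ℝ)
    (J : ∀ n, Fin (m (n+1)) → ℝ) : ∀ n, Matrix (Fin (m n)) (Fin (m 0)) ℝ
  | 0 => 1
  | n+1 => (Matrix.diagonal (J n) * W n) * prodJW W J n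

/-- The product `J_{i+t} W_{i+t} ⋯ J_{i+1} W_{i+1}` (product of `t` factors starting at layer `i+1`). -/
def prodJWFrom (W : ∀ n, Matrix (Fin (m (n+1))) (Fin (m n)) ℝ)
    (J : ∀ n, Fin (m (n+1)) → ℝ) (i : ℕ) : ∀ t, Matrix (Fin (m (i+t))) (Fin (m i)) ℝ
  | 0 => (1 : Matrix (Fin (m i)) (Fin (m i)) ℝ)
  | t+1 => (Matrix.diagonal (J (i+t)) * W (i+t)) * prodJWFrom W J i t

/-- `∑_{i=1}^n (∏_{k=i+1}^n J_k W_k) J_i b_i`, defined by the recursion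
`c_0 = 0`, `c_{n+1} = J_{n+1} W_{n+1} c_n + J_{n+1} b_{n+1}`. -/
def biasSum (W : ∀ n, Matrix (Fin (m (n+1))) (Fin (m n)) ℝ)
    (J : ∀ n, Fin (m (n+1)) → ℝ) (b : ∀ n, Fin (m (n+1)) → ℝ) : ∀ n, Fin (m n) → ℝ
  | 0 => 0
  | n+1 => (Matrix.diagonal (J n) * W n) *ᵥ biasSum W J b n + Matrix.diagonal (J n) *ᵥ b n

/-- Activation domain of a one-layer network. -/
def actDom {a c : ℕ} (J : Fin c → ℝ) (W : Matrix (Fin c) (Fin a) ℝ) (b : Fin c → ℝ) :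
    Set (Fin a → ℝ) :=
  {x | ∀ j, (J j = 1 → 0 < (W *ᵥ x + b) j) ∧ (J j ≠ 1 → (W *ᵥ x + b) j ≤ 0)}

/-- Activation domains of a multi-layer network. -/
def actDomMulti (W : ∀ n, Matrix (Fin (m (n+1))) (Fin (m n)) ℝ)
    (J : ∀ n, Fin (m (n+1)) → ℝ) (b : ∀ n, Fin (m (n+1)) → ℝ) : ℕ → Set (Fin (m 0) → ℝ)
  | 0 => cube (m 0)
  | n+1 => {x ∈ actDomMulti W J b n | net W b x n ∈ actDom (J n) (W n) (b n)}

/-- The Toeplitz matrix of a filter mask `w = (w_0, …, w_s)`. -/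
def toep (s mm : ℕ) (w : Fin (s+1) → ℝ) : Matrix (Fin (mm + s)) (Fin mm) ℝ :=
  Matrix.of fun i j =>
    if h : (j : ℕ) ≤ (i : ℕ) ∧ (i : ℕ) - (j : ℕ) ≤ s then w ⟨(i : ℕ) - (j : ℕ), by omega⟩ else 0

/-- The widths of a CNN: `m_0 = d`, `m_n = m_{n-1} + s_n`. -/
def cnnWidth (d : ℕ) (s : ℕ → ℕ) : ℕ → ℕ
  | 0 => d
  | n+1 => cnnWidth d s n + s n

/-- The CNN: layer `n+1` maps `x ↦ σ(x * w^{(n+1)} + b_{n+1})`. -/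
def cnnNet (d : ℕ) (s : ℕ → ℕ) (w : ∀ n, Fin (s n + 1) → ℝ)
    (b : ∀ n, Fin (cnnWidth d s (n+1)) → ℝ) (x : Fin d → ℝ) :
    ∀ n, Fin (cnnWidth d s n) → ℝ
  | 0 => x
  | n+1 => relu (fun i => (toep (s n) (cnnWidth d s n) (w n) *ᵥ cnnNet d s w b x n) i + b n i)

/-- The product `W_n W_{n-1} ⋯ W_1`. -/
def prodW {m : ℕ → ℕ} (W : ∀ n, Matrix (Fin (m (n+1))) (Fin (m n)) ℝ) :
    ∀ n, Matrix (Fin (m n)) (Fin (m 0)) ℝ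
  | 0 => (1 : Matrix (Fin (m 0)) (Fin (m 0)) ℝ)
  | n+1 => W n * prodW W n


section Padding

variable (p : ℝ≥0∞) [Fact (1 ≤ p)]

lemma padLp_apply {m : ℕ} (x : Fin m → ℝ) (j : ℕ) :
    padLp p x j = if h : j < m then x ⟨j, h⟩ else 0 := by
  simp only [padLp, lp.coeFn_sum, Finset.sum_apply, lp.coeFn_single, Pi.single_apply]
  split_ifs with h
  · rw [Finset.sum_eq_single_of_mem ⟨j, h⟩ (Finset.mem_univ _) fun i _ hi =>
      if_neg fun hj => hi (Fin.ext hj.symm)]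
    simp
  · exact Finset.sum_eq_zero fun i _ => if_neg fun hj : j = i => h (hj ▸ i.isLt)

lemma padCLM_apply (m : ℕ) (x : PiLp p (fun _ : Fin m => ℝ)) :
    padCLM p m x = padLp p (WithLp.equiv p (Fin m → ℝ) x) := rfl

lemma norm_padCLM_apply {m : ℕ} (x : PiLp p (fun _ : Fin m => ℝ)) :
    ‖padCLM p m x‖ = ‖x‖ := by
  have hcoord (j : ℕ) : padCLM p m x j = if h : j < m then x ⟨j, h⟩ else 0 :=
    padLp_apply p _ j
  rcases eq_or_ne p ∞ with rfl | hp
  · refine le_antisymm (lp.norm_le_of_forall_le (norm_nonneg x) fun j => ?_) ?_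
    · rw [hcoord]
      split_ifs
      exacts [PiLp.norm_apply_le x _, by simp]
    · rw [PiLp.norm_eq_ciSup]
      refine Real.iSup_le (fun i => ?_) (norm_nonneg _)
      simpa [hcoord] using lp.norm_apply_le_norm ENNReal.top_ne_zero (padCLM ∞ m x) i
  · have ht : 0 < p.toReal :=
      ENNReal.toReal_pos (zero_lt_one.trans_le Fact.out).ne' hp
    -- the `ℓ^p` series of the padded vector is the finite sum over `Fin m`, reindexed by `Fin.val`
    have hsum : HasSum (fun i : Fin m => ‖x i‖ ^ p.toReal) (‖padCLM p m x‖ ^ p.toReal) := by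
      refine ((Fin.val_injective.hasSum_iff fun j hj => ?_).mpr
        (lp.hasSum_norm ht (padCLM p m x))).congr_fun fun i => by simp [hcoord]
      rw [hcoord, dif_neg fun h => hj ⟨⟨j, h⟩, rfl⟩, norm_zero, Real.zero_rpow ht.ne']
    rw [← Real.rpow_left_inj (norm_nonneg _) (norm_nonneg _) ht.ne', hsum.unique (hasSum_fintype _),
      PiLp.norm_eq_sum ht, one_div, Real.rpow_inv_rpow (by positivity) ht.ne']

def padₗᵢ (m : ℕ) : PiLp p (fun _ : Fin m => ℝ) →ₗᵢ[ℝ] lp (fun _ : ℕ => ℝ) p :=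
  ⟨(padCLM p m).toLinearMap, norm_padCLM_apply p⟩

lemma norm_padCLM_le_one (m : ℕ) : ‖padCLM p m‖ ≤ 1 :=
  (padₗᵢ p m).norm_toContinuousLinearMap_le

lemma norm_padCLM_comp {E : Type*} [NormedAddCommGroup E] [NormedSpace ℝ E] {m : ℕ}
    (A : E →L[ℝ] PiLp p (fun _ : Fin m => ℝ)) : ‖(padCLM p m).comp A‖ = ‖A‖ :=
  (padₗᵢ p m).norm_toContinuousLinearMap_comp

end Padding

section MatrixOperators

variable (p : ℝ≥0∞) [Fact (1 ≤ p)] {a b c : ℕ}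

lemma matCLM_apply (A : Matrix (Fin b) (Fin a) ℝ) (x : PiLp p (fun _ : Fin a => ℝ)) :
    matCLM p A x = (WithLp.equiv p (Fin b → ℝ)).symm (A *ᵥ WithLp.equiv p (Fin a → ℝ) x) := rfl

lemma matCLM_one : matCLM p (1 : Matrix (Fin a) (Fin a) ℝ) = ContinuousLinearMap.id ℝ _ := by
  ext1 x
  simp [matCLM_apply]

lemma matCLM_add (A B : Matrix (Fin b) (Fin a) ℝ) :
    matCLM p (A + B) = matCLM p A + matCLM p B := by
  ext1 x
  simp [matCLM_apply, Matrix.add_mulVec]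

lemma matCLM_mul (A : Matrix (Fin c) (Fin b) ℝ) (B : Matrix (Fin b) (Fin a) ℝ) :
    matCLM p (A * B) = (matCLM p A).comp (matCLM p B) := by
  ext1 x
  simp [matCLM_apply, Matrix.mulVec_mulVec]

lemma Ipad_mulVec (v : Fin a → ℝ) (i : Fin b) :
    (Ipad b a *ᵥ v) i = if h : (i : ℕ) < a then v ⟨i, h⟩ else 0 := by
  simp only [Matrix.mulVec, dotProduct, Ipad, Matrix.of_apply, ite_mul, one_mul, zero_mul]
  split_ifs with h
  · rw [Finset.sum_eq_single_of_mem ⟨i, h⟩ (Finset.mem_univ _) fun j _ hj =>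
      if_neg fun hij => hj (Fin.ext hij.symm)]
    simp
  · exact Finset.sum_eq_zero fun j _ => if_neg fun hij : (i : ℕ) = j => h (hij ▸ j.isLt)

lemma padCLM_comp_matCLM_Ipad (hab : a ≤ b) :
    (padCLM p b).comp (matCLM p (Ipad b a)) = padCLM p a := by
  ext1 x
  refine lp.ext (funext fun j => ?_)
  simp only [ContinuousLinearMap.comp_apply, padCLM_apply, matCLM_apply, Equiv.apply_symm_apply,
    padLp_apply, Ipad_mulVec]
  by_cases hja : j < a
  · simp [hja, hja.trans_le hab]
  · split_ifs <;> rfl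

end MatrixOperators

section ResidualProducts

variable (p : ℝ≥0∞) [Fact (1 ≤ p)]

lemma norm_matCLM_prodW_le (W : ∀ n, Matrix (Fin (m (n+1))) (Fin (m n)) ℝ) (n : ℕ) :
    ‖matCLM p (prodW W n)‖ ≤ ∏ k ∈ Finset.range n, ‖matCLM p (W k)‖ := by
  induction n with
  | zero => simpa [prodW, matCLM_one] using ContinuousLinearMap.norm_id_le
  | succ n ih =>
    rw [prodW, matCLM_mul, Finset.prod_range_succ, mul_comm]
    exact (ContinuousLinearMap.opNorm_comp_le _ _).trans
      (mul_le_mul_of_nonneg_left ih (norm_nonneg _))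

lemma norm_matCLM_Ipad_add_le {a b : ℕ} (hab : a ≤ b) (P : Matrix (Fin b) (Fin a) ℝ) :
    ‖matCLM p (Ipad b a + P)‖ ≤ 1 + ‖matCLM p P‖ :=
  calc ‖matCLM p (Ipad b a + P)‖ = ‖(padCLM p b).comp (matCLM p (Ipad b a + P))‖ :=
        (norm_padCLM_comp p _).symm
    _ = ‖padCLM p a + (padCLM p b).comp (matCLM p P)‖ := by
        rw [matCLM_add, ContinuousLinearMap.comp_add, padCLM_comp_matCLM_Ipad p hab]
    _ ≤ 1 + ‖matCLM p P‖ :=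
        (norm_add_le _ _).trans (add_le_add (norm_padCLM_le_one p a) (norm_padCLM_comp p _).le)

lemma padCLM_comp_Ipad_add_comp_sub {E : Type*} [NormedAddCommGroup E] [NormedSpace ℝ E]
    {a b : ℕ} (hab : a ≤ b) (P : Matrix (Fin b) (Fin a) ℝ)
    (X : E →L[ℝ] PiLp p (fun _ : Fin a => ℝ)) :
    (padCLM p b).comp ((matCLM p (Ipad b a + P)).comp X) - (padCLM p a).comp X =
      (padCLM p b).comp ((matCLM p P).comp X) := by
  rw [matCLM_add, ContinuousLinearMap.add_comp, ContinuousLinearMap.comp_add,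
    ← ContinuousLinearMap.comp_assoc, padCLM_comp_matCLM_Ipad p hab, add_sub_cancel_left]

end ResidualProducts

theorem stmt5_general (p : ℝ≥0∞) [Fact (1 ≤ p)] (m : ℕ → ℕ)
    (hmono : ∀ n, m n ≤ m (n+1))
    (W P : ∀ n, Matrix (Fin (m (n+1))) (Fin (m n)) ℝ)
    (hW : ∀ n, W n = Ipad (m (n+1)) (m n) + P n)
    (hP : Summable fun n => ‖matCLM p (P n)‖) :
    ∃ L : PiLp p (fun _ : Fin (m 0) => ℝ) →L[ℝ] lp (fun _ : ℕ => ℝ) p,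
      Tendsto (fun n => (padCLM p (m n)).comp (matCLM p (prodW W n)))
        atTop (nhds L) := by
  set C := Real.exp (∑' n, ‖matCLM p (P n)‖)
  have hprodW (n : ℕ) : ‖matCLM p (prodW W n)‖ ≤ C :=
    calc ‖matCLM p (prodW W n)‖ ≤ ∏ k ∈ Finset.range n, ‖matCLM p (W k)‖ :=
          norm_matCLM_prodW_le p W n
      _ ≤ ∏ k ∈ Finset.range n, (1 + ‖matCLM p (P k)‖) :=
          Finset.prod_le_prod (fun _ _ => norm_nonneg _) fun k _ =>
            hW k ▸ norm_matCLM_Ipad_add_le p (hmono k) (P k)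
      _ ≤ Real.exp (∑ k ∈ Finset.range n, ‖matCLM p (P k)‖) :=
          Real.prod_one_add_le_exp_sum _ fun _ => norm_nonneg _
      _ ≤ C := Real.exp_le_exp.mpr (hP.sum_le_tsum _ fun _ _ => norm_nonneg _)
  have hstep (n : ℕ) : dist ((padCLM p (m n)).comp (matCLM p (prodW W n)))
      ((padCLM p (m (n+1))).comp (matCLM p (prodW W (n+1)))) ≤ C * ‖matCLM p (P n)‖ := by
    rw [dist_comm, dist_eq_norm, prodW, matCLM_mul, hW n,
      padCLM_comp_Ipad_add_comp_sub p (hmono n), norm_padCLM_comp, mul_comm]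
    exact (ContinuousLinearMap.opNorm_comp_le _ _).trans
      (mul_le_mul_of_nonneg_left (hprodW n) (norm_nonneg _))
  exact cauchySeq_tendsto_of_complete (cauchySeq_of_dist_le_of_summable _ hstep (hP.mul_left C))

theorem stmt5 (p : ℝ≥0∞) [Fact (1 ≤ p)] (m : ℕ → ℕ) (hpos : ∀ n, 0 < m n)
    (hmono : ∀ n, m n ≤ m (n+1))
    (W P : ∀ n, Matrix (Fin (m (n+1))) (Fin (m n)) ℝ)
    (hW : ∀ n, W n = Ipad (m (n+1)) (m n) + P n)
    (hP : Summable fun n => ‖matCLM p (P n)‖) :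
    ∃ L : PiLp p (fun _ : Fin (m 0) => ℝ) →L[ℝ] lp (fun _ : ℕ => ℝ) p,
      Tendsto (fun n => (padCLM p (m n)).comp (matCLM p (prodW W n)))
        atTop (nhds L) :=
  stmt5_general p m hmono W P hW hP

end
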